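/- arXiv:1811.12682 — 3 statements merged into one kernel-verified Lean document; each statement's English description precedes it below -/
import Mathlib

section
/- Let ξ* and ξ' be probability measures on a finite set S, f : S → ℝ^k, with M(ξ) = Σ_s ξ(s) f(s) f(s)ᵀ and M(ξ*) invertible. Then the derivative at α = 0 of α ↦ log det(M((1-α)ξ* + αξ')) equals -k + Σ_{s∈S} ξ'(s) f(s)ᵀ M(ξ*)⁻¹ f(s). -/
open Matrix Polynomial

/-!
The mixture is a line in matrix space: by linearity of `M`,
`M((1-α)ξ* + αξ') = A + α (M ξ' - A)` with `A = M ξ*`. Writing `A + αB = A (1 + α A⁻¹B)` and using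
`det (1 + αC) = 1 + α tr C + O(α²)` gives Jacobi's formula `d/dα log det (A + αB) |₀ = tr (A⁻¹B)`.
Finally `tr (A⁻¹(M ξ' - A)) = tr (A⁻¹ M ξ') - k` and `tr (A⁻¹ f fᵀ) = fᵀ A⁻¹ f`.
-/

theorem Matrix.hasDerivAt_det_one_add_smul {𝕜 n : Type*} [NontriviallyNormedField 𝕜]
    [Fintype n] [DecidableEq n] (C : Matrix n n 𝕜) :
    HasDerivAt (fun t : 𝕜 => (1 + t • C).det) C.trace 0 := by
  have h := (det (1 + (X : 𝕜[X]) • C.map Polynomial.C)).hasDerivAt 0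
  rw [derivative_det_one_add_X_smul] at h
  convert h using 2 with t
  simp [eval_det, ← smul_eq_mul_diagonal]

theorem Matrix.hasDerivAt_det_add_smul {𝕜 n : Type*} [NontriviallyNormedField 𝕜]
    [Fintype n] [DecidableEq n] (A B : Matrix n n 𝕜) (hA : IsUnit A.det) :
    HasDerivAt (fun t : 𝕜 => (A + t • B).det) (A.det * (A⁻¹ * B).trace) 0 := by
  have hfactor : ∀ t : 𝕜, A + t • B = A * (1 + t • (A⁻¹ * B)) := fun t => by
    rw [mul_add, mul_one, mul_smul_comm, mul_nonsing_inv_cancel_left _ _ hA]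
  simpa only [hfactor, det_mul] using (hasDerivAt_det_one_add_smul (A⁻¹ * B)).const_mul A.det

theorem Matrix.hasDerivAt_log_det_add_smul {n : Type*} [Fintype n] [DecidableEq n]
    (A B : Matrix n n ℝ) (hA : IsUnit A.det) :
    HasDerivAt (fun t : ℝ => Real.log (A + t • B).det) (A⁻¹ * B).trace 0 := by
  have h := (hasDerivAt_det_add_smul A B hA).log (by simpa using hA.ne_zero)
  rwa [zero_smul, add_zero, mul_div_cancel_left₀ _ hA.ne_zero] at h

theorem Matrix.trace_mul_vecMulVec {R m n : Type*} [CommSemiring R] [Fintype m] [Fintype n]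
    (A : Matrix n m R) (u : m → R) (v : n → R) :
    (A * vecMulVec u v).trace = v ⬝ᵥ (A *ᵥ u) := by
  rw [mul_vecMulVec, trace_vecMulVec, dotProduct_comm]

theorem stmt_4_general {S : Type*} [Fintype S] (k : ℕ) (f : S → Fin k → ℝ)
    (ξstar ξ' : S → ℝ)
    (M : (S → ℝ) → Matrix (Fin k) (Fin k) ℝ)
    (hM : ∀ ξ, M ξ = ∑ s, ξ s • Matrix.vecMulVec (f s) (f s))
    (hinv : IsUnit (M ξstar).det) :
    deriv (fun α : ℝ =>
        Real.log (M (fun s => (1 - α) * ξstar s + α * ξ' s)).det) 0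
      = -(k : ℝ) + ∑ s, ξ' s * (f s ⬝ᵥ ((M ξstar)⁻¹ *ᵥ f s)) := by
  have hmix : ∀ α : ℝ, M (fun s => (1 - α) * ξstar s + α * ξ' s)
      = M ξstar + α • (M ξ' - M ξstar) := fun α => by
    simp only [hM, Finset.smul_sum, smul_smul, ← Finset.sum_add_distrib,
      ← Finset.sum_sub_distrib, ← add_smul, ← sub_smul]
    congr! 2
    ring
  simp only [hmix]
  rw [(hasDerivAt_log_det_add_smul _ _ hinv).deriv, mul_sub, nonsing_inv_mul _ hinv, trace_sub,
    trace_one, Fintype.card_fin, hM ξ', Finset.mul_sum, trace_sum]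
  simp only [mul_smul_comm, trace_smul, trace_mul_vecMulVec, smul_eq_mul]
  ring

/-- Derivative at α = 0 of log det M((1-α)ξ* + αξ') equals -k + Σ ξ'(s) d(s, ξ*). -/
theorem stmt_4 {S : Type*} [Fintype S] (k : ℕ) (f : S → Fin k → ℝ)
    (ξstar ξ' : S → ℝ)
    (hs0 : ∀ s, 0 ≤ ξstar s) (hs1 : ∑ s, ξstar s = 1)
    (h'0 : ∀ s, 0 ≤ ξ' s) (h'1 : ∑ s, ξ' s = 1)
    (M : (S → ℝ) → Matrix (Fin k) (Fin k) ℝ)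
    (hM : ∀ ξ, M ξ = ∑ s, ξ s • Matrix.vecMulVec (f s) (f s))
    (hinv : IsUnit (M ξstar).det) :
    deriv (fun α : ℝ =>
        Real.log (M (fun s => (1 - α) * ξstar s + α * ξ' s)).det) 0
      = -(k : ℝ) + ∑ s, ξ' s * (f s ⬝ᵥ ((M ξstar)⁻¹ *ᵥ f s)) :=
  stmt_4_general k f ξstar ξ' M hM hinv
end

section
/- Let ξ* be a probability measure on a finite set S with f : S → ℝ^k and M(ξ*) invertible. If max_{s∈S} f(s)ᵀ M(ξ*)⁻¹ f(s) = k, then for any probability measure ξ' on S with M(ξ') defined as usual, det(M(ξ*)) ≥ det(M(ξ')). -/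
/-!
The variance bound gives `tr (M(ξ*)⁻¹ M(ξ')) = ∑ ξ'(s) f(s)ᵀ M(ξ*)⁻¹ f(s) ≤ k`. Conjugating `M(ξ')` by
`√(M(ξ*)⁻¹)` yields a positive semidefinite matrix with this trace and determinant
`det M(ξ') / det M(ξ*)`; its eigenvalues are nonnegative with sum at most `k`, so by AM-GM their
product is at most `1`.
-/

open Matrix
open scoped MatrixOrder

/-- Each factor satisfies `z ≤ exp (z - 1)`, so the product is at most `exp (∑ z - card) ≤ 1`. -/
theorem Real.prod_le_one_of_sum_le_card {ι : Type*} [Fintype ι] (z : ι → ℝ) (hz : ∀ i, 0 ≤ z i)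
    (h : ∑ i, z i ≤ Fintype.card ι) : ∏ i, z i ≤ 1 :=
  calc ∏ i, z i ≤ ∏ i, Real.exp (z i - 1) :=
        Finset.prod_le_prod (fun i _ => hz i) fun i _ => by linarith [Real.add_one_le_exp (z i - 1)]
    _ = Real.exp (∑ i, z i - Fintype.card ι) := by
        rw [← Real.exp_sum, Finset.sum_sub_distrib]; simp
    _ ≤ 1 := Real.exp_le_one_iff.mpr (by linarith)

theorem Matrix.PosSemidef.det_le_one_of_trace_le_card {n : Type*} [Fintype n] [DecidableEq n]
    {A : Matrix n n ℝ} (hA : A.PosSemidef) (h : A.trace ≤ Fintype.card n) : A.det ≤ 1 := by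
  rw [hA.isHermitian.det_eq_prod_eigenvalues]
  rw [hA.isHermitian.trace_eq_sum_eigenvalues] at h
  exact_mod_cast Real.prod_le_one_of_sum_le_card _ hA.eigenvalues_nonneg (by simpa using h)

theorem Matrix.PosDef.det_le_det_of_trace_inv_mul_le_card {n : Type*} [Fintype n] [DecidableEq n]
    {N Q : Matrix n n ℝ} (hN : N.PosDef) (hQ : Q.PosSemidef)
    (h : (N⁻¹ * Q).trace ≤ Fintype.card n) : Q.det ≤ N.det := by
  set R := CFC.sqrt N⁻¹
  have hR : R.IsHermitian := (CFC.sqrt_nonneg N⁻¹).posSemidef.isHermitian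
  have hRR : R * R = N⁻¹ := CFC.sqrt_mul_sqrt_self N⁻¹ hN.inv.posSemidef.nonneg
  have hC : (R * Q * R).PosSemidef := by
    simpa only [hR.eq] using hQ.mul_mul_conjTranspose_same R
  have htrace : (R * Q * R).trace = (N⁻¹ * Q).trace := by
    rw [Matrix.trace_mul_comm, ← mul_assoc, hRR]
  have hdet : (R * Q * R).det = N.det⁻¹ * Q.det := by
    rw [Matrix.det_mul, Matrix.det_mul, mul_right_comm, ← Matrix.det_mul, hRR,
      Matrix.det_nonsing_inv, Ring.inverse_eq_inv]
  have hle : N.det⁻¹ * Q.det ≤ 1 := hdet ▸ hC.det_le_one_of_trace_le_card (htrace ▸ h)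
  rwa [inv_mul_le_iff₀ hN.det_pos, mul_one] at hle

theorem Matrix.posSemidef_sum_smul_vecMulVec_self {ι n : Type*} [Fintype ι] [Fintype n]
    (w : ι → ℝ) (hw : ∀ i, 0 ≤ w i) (v : ι → n → ℝ) :
    (∑ i, w i • vecMulVec (v i) (v i)).PosSemidef :=
  posSemidef_sum _ fun i _ => by
    simpa using (posSemidef_vecMulVec_self_star (v i)).smul (hw i)

theorem Matrix.trace_mul_sum_smul_vecMulVec_self {ι n R : Type*} [Fintype ι] [Fintype n]
    [CommRing R] (A : Matrix n n R) (w : ι → R) (v : ι → n → R) :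
    (A * ∑ i, w i • vecMulVec (v i) (v i)).trace = ∑ i, w i * (v i ⬝ᵥ (A *ᵥ v i)) := by
  simp only [Matrix.mul_sum, Matrix.mul_smul, Matrix.trace_sum, Matrix.trace_smul,
    Matrix.mul_vecMulVec, Matrix.trace_vecMulVec, smul_eq_mul, dotProduct_comm]

theorem stmt_6_general {S : Type*} [Fintype S] [Nonempty S] (k : ℕ) (f : S → Fin k → ℝ)
    (ξstar : S → ℝ) (hs0 : ∀ s, 0 ≤ ξstar s)
    (M : (S → ℝ) → Matrix (Fin k) (Fin k) ℝ)
    (hM : ∀ ξ, M ξ = ∑ s, ξ s • Matrix.vecMulVec (f s) (f s))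
    (hinv : IsUnit (M ξstar).det)
    (hmax : Finset.univ.sup' Finset.univ_nonempty
      (fun s => f s ⬝ᵥ ((M ξstar)⁻¹ *ᵥ f s)) = (k : ℝ)) :
    ∀ ξ' : S → ℝ, (∀ s, 0 ≤ ξ' s) → ∑ s, ξ' s = 1 →
      (M ξ').det ≤ (M ξstar).det := by
  intro ξ' h0' h1'
  have hN : (M ξstar).PosDef := by
    have hpsd : (M ξstar).PosSemidef := hM ξstar ▸ posSemidef_sum_smul_vecMulVec_self ξstar hs0 f
    exact hpsd.posDef_iff_det_ne_zero.mpr hinv.ne_zero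
  have hvar : ∀ s, f s ⬝ᵥ ((M ξstar)⁻¹ *ᵥ f s) ≤ k := fun s =>
    hmax ▸ Finset.le_sup' (fun s => f s ⬝ᵥ ((M ξstar)⁻¹ *ᵥ f s)) (Finset.mem_univ s)
  refine hN.det_le_det_of_trace_inv_mul_le_card
    (hM ξ' ▸ posSemidef_sum_smul_vecMulVec_self ξ' h0' f) ?_
  calc ((M ξstar)⁻¹ * M ξ').trace = ∑ s, ξ' s * (f s ⬝ᵥ ((M ξstar)⁻¹ *ᵥ f s)) := by
        rw [hM ξ', trace_mul_sum_smul_vecMulVec_self]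
    _ ≤ ∑ s, ξ' s * k := Finset.sum_le_sum fun s _ => mul_le_mul_of_nonneg_left (hvar s) (h0' s)
    _ = Fintype.card (Fin k) := by rw [← Finset.sum_mul, h1', one_mul, Fintype.card_fin]

/-- If the maximum of the variance function at ξ* equals k, then ξ* is D-optimal. -/
theorem stmt_6 {S : Type*} [Fintype S] [Nonempty S] (k : ℕ) (f : S → Fin k → ℝ)
    (ξstar : S → ℝ) (hs0 : ∀ s, 0 ≤ ξstar s) (hs1 : ∑ s, ξstar s = 1)
    (M : (S → ℝ) → Matrix (Fin k) (Fin k) ℝ)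
    (hM : ∀ ξ, M ξ = ∑ s, ξ s • Matrix.vecMulVec (f s) (f s))
    (hinv : IsUnit (M ξstar).det)
    (hmax : Finset.univ.sup' Finset.univ_nonempty
      (fun s => f s ⬝ᵥ ((M ξstar)⁻¹ *ᵥ f s)) = (k : ℝ)) :
    ∀ ξ' : S → ℝ, (∀ s, 0 ≤ ξ' s) → ∑ s, ξ' s = 1 →
      (M ξ').det ≤ (M ξstar).det :=
  stmt_6_general k f ξstar hs0 M hM hinv hmax
end

section
/- Let ξ* be a probability measure on a finite set S maximizing det(M(ξ)) over all probability measures ξ on S, with M(ξ*) invertible. Then f(s)ᵀ M(ξ*)⁻¹ f(s) ≤ k for all s ∈ S, and consequently max_{s∈S} f(s)ᵀ M(ξ*)⁻¹ f(s) = k. -/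
/-!
Mixing a D-optimal design `ξ` with the point mass at `s`, `η = (ξ + t δₛ) / (1 + t)`, gives
`M η = (M ξ + t f(s) f(s)ᵀ) / (1 + t)`, whose determinant is `det (M ξ) (1 + t d(s)) / (1 + t)ᵏ`
by the matrix determinant lemma, where `d(s) = f(s)ᵀ (M ξ)⁻¹ f(s)`. Optimality forces
`1 + t d(s) ≤ (1 + t)ᵏ` for all `t > 0`, and `t → 0⁺` yields `d(s) ≤ k`, the derivative of
`(1 + t)ᵏ` at `0`. Conversely the `ξ`-average of `d` is `tr ((M ξ)⁻¹ M ξ) = k`, so `max d = k`.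
-/

open Matrix

theorem le_of_forall_one_add_mul_le_one_add_pow {d : ℝ} {k : ℕ}
    (h : ∀ t > 0, 1 + t * d ≤ (1 + t) ^ k) : d ≤ k := by
  have hderiv : HasDerivAt (fun t : ℝ => (1 + t) ^ k) k 0 := by
    simpa using ((hasDerivAt_id (0 : ℝ)).const_add 1).fun_pow k
  refine ge_of_tendsto hderiv.tendsto_slope_zero_right ?_
  filter_upwards [self_mem_nhdsWithin] with t (ht : 0 < t)
  rw [smul_eq_mul, le_inv_mul_iff₀ ht]
  simpa [add_comm, le_sub_iff_add_le] using h t ht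

namespace Matrix

variable {n R : Type*} [Fintype n] [CommRing R]

theorem det_add_vecMulVec [DecidableEq n] {A : Matrix n n R} (hA : IsUnit A.det) (u v : n → R) :
    (A + vecMulVec u v).det = A.det * (1 + v ⬝ᵥ (A⁻¹ *ᵥ u)) := by
  rw [vecMulVec_eq Unit, det_add_replicateCol_mul_replicateRow (ι := Unit) hA, Matrix.mul_assoc,
    ← replicateCol_mulVec, replicateRow_mul_replicateCol, det_unique (n := Unit)]
  simp

theorem trace_mul_vecMulVec_s7 (B : Matrix n n R) (u v : n → R) :
    trace (B * vecMulVec u v) = v ⬝ᵥ (B *ᵥ u) := by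
  rw [mul_vecMulVec, trace_vecMulVec, dotProduct_comm]

end Matrix

section InformationMatrix

variable {S n R : Type*} [Fintype S]

def infoMatrix [CommRing R] (f : S → n → R) (ξ : S → R) : Matrix n n R :=
  ∑ s, ξ s • vecMulVec (f s) (f s)

section CommRing

variable [CommRing R] (f : S → n → R)

theorem infoMatrix_add (ξ η : S → R) :
    infoMatrix f (ξ + η) = infoMatrix f ξ + infoMatrix f η := by
  simp only [infoMatrix, Pi.add_apply, add_smul, Finset.sum_add_distrib]

theorem infoMatrix_smul (c : R) (ξ : S → R) : infoMatrix f (c • ξ) = c • infoMatrix f ξ := by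
  simp only [infoMatrix, Pi.smul_apply, smul_eq_mul, mul_smul, Finset.smul_sum]

theorem infoMatrix_single [DecidableEq S] (s : S) :
    infoMatrix f (Pi.single s 1) = vecMulVec (f s) (f s) := by
  simp [infoMatrix, Pi.single_apply]

theorem trace_mul_infoMatrix [Fintype n] (B : Matrix n n R) (ξ : S → R) :
    trace (B * infoMatrix f ξ) = ∑ s, ξ s * (f s ⬝ᵥ (B *ᵥ f s)) := by
  simp only [infoMatrix, Matrix.mul_sum, trace_sum, Matrix.mul_smul, trace_smul,
    trace_mul_vecMulVec_s7, smul_eq_mul]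

theorem sum_mul_dotProduct_inv_infoMatrix_mulVec [Fintype n] [DecidableEq n] {ξ : S → R}
    (hξ : IsUnit (infoMatrix f ξ).det) :
    ∑ s, ξ s * (f s ⬝ᵥ ((infoMatrix f ξ)⁻¹ *ᵥ f s)) = Fintype.card n := by
  rw [← trace_mul_infoMatrix, nonsing_inv_mul _ hξ, trace_one]

end CommRing

theorem posSemidef_infoMatrix [Fintype n] (f : S → n → ℝ) {ξ : S → ℝ} (hξ : ∀ s, 0 ≤ ξ s) :
    (infoMatrix f ξ).PosSemidef :=
  posSemidef_sum _ fun s _ => (posSemidef_vecMulVec_self_star (f s)).smul (hξ s)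

theorem dotProduct_inv_infoMatrix_mulVec_le_card [Fintype n] [DecidableEq n] [DecidableEq S]
    {f : S → n → ℝ} {ξ : S → ℝ} (hξ0 : ∀ s, 0 ≤ ξ s) (hξ1 : ∑ s, ξ s = 1)
    (hdet : IsUnit (infoMatrix f ξ).det)
    (hopt : ∀ η : S → ℝ, (∀ s, 0 ≤ η s) → ∑ s, η s = 1 →
      (infoMatrix f η).det ≤ (infoMatrix f ξ).det) (s : S) :
    f s ⬝ᵥ ((infoMatrix f ξ)⁻¹ *ᵥ f s) ≤ Fintype.card n := by
  set A := infoMatrix f ξ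
  have hA : 0 < A.det := (posSemidef_infoMatrix f hξ0).det_nonneg.lt_of_ne' hdet.ne_zero
  refine le_of_forall_one_add_mul_le_one_add_pow fun t ht => ?_
  set η : S → ℝ := (1 + t)⁻¹ • (ξ + t • Pi.single s 1)
  have hη0 : 0 ≤ η := smul_nonneg (by positivity)
    (add_nonneg hξ0 (smul_nonneg ht.le (Pi.single_nonneg.2 zero_le_one)))
  have hη1 : ∑ r, η r = 1 := by
    simp only [η, Pi.smul_apply, Pi.add_apply, smul_eq_mul, Finset.sum_add_distrib,
      ← Finset.mul_sum, hξ1, mul_one, Finset.sum_pi_single', Finset.mem_univ, ↓reduceIte]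
    field_simp
  have hle := hopt η hη0 hη1
  rw [infoMatrix_smul, infoMatrix_add, infoMatrix_smul, infoMatrix_single, det_smul,
    ← vecMulVec_smul, det_add_vecMulVec hdet, smul_dotProduct, smul_eq_mul, inv_pow,
    inv_mul_le_iff₀ (by positivity), mul_comm _ A.det] at hle
  exact le_of_mul_le_mul_left hle hA

end InformationMatrix

/-- D-optimality of ξ* implies d(s, ξ*) ≤ k for all s and max d(·, ξ*) = k. -/
theorem stmt_7 {S : Type*} [Fintype S] [Nonempty S] (k : ℕ) (f : S → Fin k → ℝ)
    (ξstar : S → ℝ) (hs0 : ∀ s, 0 ≤ ξstar s) (hs1 : ∑ s, ξstar s = 1)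
    (M : (S → ℝ) → Matrix (Fin k) (Fin k) ℝ)
    (hM : ∀ ξ, M ξ = ∑ s, ξ s • Matrix.vecMulVec (f s) (f s))
    (hinv : IsUnit (M ξstar).det)
    (hopt : ∀ ξ : S → ℝ, (∀ s, 0 ≤ ξ s) → ∑ s, ξ s = 1 →
      (M ξ).det ≤ (M ξstar).det) :
    (∀ s : S, f s ⬝ᵥ ((M ξstar)⁻¹ *ᵥ f s) ≤ (k : ℝ)) ∧
    Finset.univ.sup' Finset.univ_nonempty
      (fun s => f s ⬝ᵥ ((M ξstar)⁻¹ *ᵥ f s)) = (k : ℝ) := by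
  classical
  obtain rfl : M = infoMatrix f := funext hM
  set d : S → ℝ := fun s => f s ⬝ᵥ ((infoMatrix f ξstar)⁻¹ *ᵥ f s)
  have hbound (s : S) : d s ≤ k := by
    simpa using dotProduct_inv_infoMatrix_mulVec_le_card hs0 hs1 hinv hopt s
  refine ⟨hbound, le_antisymm (Finset.sup'_le _ _ fun s _ => hbound s) ?_⟩
  calc (k : ℝ) = ∑ s, ξstar s * d s := by
        simpa using (sum_mul_dotProduct_inv_infoMatrix_mulVec f hinv).symm
    _ ≤ ∑ s, ξstar s * Finset.univ.sup' Finset.univ_nonempty d :=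
        Finset.sum_le_sum fun s _ =>
          mul_le_mul_of_nonneg_left (Finset.le_sup' d (Finset.mem_univ s)) (hs0 s)
    _ = Finset.univ.sup' Finset.univ_nonempty d := by rw [← Finset.sum_mul, hs1, one_mul]
end
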